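/- arXiv:1909.02421 — 2 statements merged into one kernel-verified Lean document; each statement's English description precedes it below -/
import Mathlib

section
/- Let k ≥ 3 and consider the k-swap game with k²−2 strategic agents of each type on the three-layer tree topology (root α, set B of k(k−1)−1 children, and k leaf children Γ_β per β ∈ B). No assignment in which some type T_ℓ has no agent occupying any node of B can be an equilibrium. -/
/-!
Let `t` be the type missing from `B`. If two middle nodes of the same type `s` both have a leaf
child of type `t`, the `t`-agent on such a leaf below one of them (utility `0`) and the `s`-agent
on the other middle node (utility `< 1`) both gain by swapping: they end up next to a `t`-leaf
and next to an `s`-node respectively.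

Otherwise the type of the middle node is injective on the set `S` of middle nodes with a
`t`-leaf, so `|S| ≤ k - 1`, and the `k² - 2` agents of type `t` live on the root and on the leaves
below `S`, which are at most `1 + k (k - 1)` nodes. For `k ≥ 3` this forces equality: the root
and all leaves below `S` carry type `t`, and `S` realises every other type. As
`|B| = k (k - 1) - 1 > k - 1`, some middle node outside `S` shares its type with some `b ∈ S`,
and then the root agent and the agent at `b`, both of utility `0`, gain by swapping.
-/

open Finset

namespace SwapGame

/-- Build a simple graph from a (not necessarily symmetric) boolean relation
by symmetrizing it and removing loops. -/
def mkGraph {V : Type*} (r : V → V → Bool) : SimpleGraph V where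
  Adj a b := a ≠ b ∧ (r a b ∨ r b a)
  symm := ⟨fun {a b} h => ⟨Ne.symm h.1, Or.symm h.2⟩⟩
  loopless := ⟨fun a h => h.1 rfl⟩

instance mkGraph.instDecidableRel {V : Type*} [DecidableEq V] (r : V → V → Bool) :
    DecidableRel (mkGraph r).Adj :=
  fun a b => inferInstanceAs (Decidable (a ≠ b ∧ (r a b ∨ r b a)))

variable {A V K : Type*} [Fintype V] [DecidableEq A] [DecidableEq V] [DecidableEq K]

/-- The assignment obtained from `σ` by swapping the locations of agents `i` and `j`. -/
def swapA (σ : A ≃ V) (i j : A) : A ≃ V := (Equiv.swap i j).trans σ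

/-- The utility of agent `i` under assignment `σ`: the fraction of the neighbors of the
node of `i` that are occupied by agents of the same type (friends of `i`). -/
def util (G : SimpleGraph V) [DecidableRel G.Adj] (c : A → K) (σ : A ≃ V) (i : A) : ℚ :=
  (((G.neighborFinset (σ i)).filter (fun w => c (σ.symm w) = c i)).card : ℚ) /
    ((G.neighborFinset (σ i)).card : ℚ)

/-- Agents `i` and `j` both strictly increase their utility by swapping their locations. -/
def improving (G : SimpleGraph V) [DecidableRel G.Adj] (c : A → K) (σ : A ≃ V)
    (i j : A) : Prop :=
  util G c σ i < util G c (swapA σ i j) i ∧ util G c σ j < util G c (swapA σ i j) j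

/-- An assignment is an equilibrium if no pair of agents can both strictly increase
their utility by swapping positions. -/
def isEquilibrium (G : SimpleGraph V) [DecidableRel G.Adj] (c : A → K) (σ : A ≃ V) : Prop :=
  ¬ ∃ i j : A, improving G c σ i j

/-- The social welfare of an assignment: the sum of the utilities of all agents. -/
def SW [Fintype A] (G : SimpleGraph V) [DecidableRel G.Adj] (c : A → K) (σ : A ≃ V) : ℚ :=
  ∑ i : A, util G c σ i

/-- Agent `i` is exposed: at least one neighbor is occupied by an agent of another type. -/
def exposed (G : SimpleGraph V) [DecidableRel G.Adj] (c : A → K) (σ : A ≃ V) (i : A) : Prop :=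
  ((G.neighborFinset (σ i)).filter (fun w => c (σ.symm w) ≠ c i)).Nonempty

instance exposed.instDecidable (G : SimpleGraph V) [DecidableRel G.Adj] (c : A → K)
    (σ : A ≃ V) : DecidablePred (exposed G c σ) :=
  fun _ => inferInstanceAs (Decidable (Finset.Nonempty _))

/-- The degree of integration of an assignment: the number of exposed agents. -/
def DI [Fintype A] (G : SimpleGraph V) [DecidableRel G.Adj] (c : A → K) (σ : A ≃ V) : ℕ :=
  (univ.filter (fun i : A => exposed G c σ i)).card

end SwapGame

namespace SwapGame

/-- The three-layer tree topology for `k`-swap games: a root, a set `B` of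
`k(k-1)-1` middle nodes (children of the root), and `k` leaf children per middle node. -/
inductive TV (k : ℕ) where
  | root : TV k
  | mid : Fin (k*(k-1)-1) → TV k
  | leaf : Fin (k*(k-1)-1) → Fin k → TV k
  deriving DecidableEq, Fintype

def adjT {k : ℕ} : TV k → TV k → Bool
  | .root, .mid _ => true
  | .mid i, .leaf j _ => i == j
  | _, _ => false

abbrev GT (k : ℕ) : SimpleGraph (TV k) := mkGraph (@adjT k)

/-- Agents: `k` types with `k^2 - 2` agents each; the type of an agent is its first
component. -/
abbrev AgT (k : ℕ) := Fin k × Fin (k^2 - 2)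

end SwapGame

namespace SwapGame

section Swap

variable {A V : Type*} [DecidableEq A]

theorem swapA_apply_left (σ : A ≃ V) (i j : A) : swapA σ i j i = σ j := by
  simp [swapA]

theorem swapA_apply_right (σ : A ≃ V) (i j : A) : swapA σ i j j = σ i := by
  simp [swapA]

theorem swapA_symm_apply_of_ne (σ : A ≃ V) {i j : A} {w : V} (hi : w ≠ σ i) (hj : w ≠ σ j) :
    (swapA σ i j).symm w = σ.symm w := by
  rw [swapA, Equiv.symm_trans_apply, Equiv.symm_swap, Equiv.swap_apply_of_ne_of_ne]
  · exact fun h => hi (σ.symm_apply_eq.1 h)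
  · exact fun h => hj (σ.symm_apply_eq.1 h)

end Swap

section Utility

variable {A V K : Type*} [Fintype V] [DecidableEq K]
  {G : SimpleGraph V} [DecidableRel G.Adj] {c : A → K} {σ : A ≃ V} {i : A}

theorem util_eq_zero_of_forall_adj (h : ∀ w, G.Adj (σ i) w → c (σ.symm w) ≠ c i) :
    util G c σ i = 0 := by
  rw [util, filter_false_of_mem fun w hw => h w ((G.mem_neighborFinset _ _).1 hw)]
  simp

theorem util_eq_one_of_forall_adj {w : V} (hw : G.Adj (σ i) w)
    (h : ∀ w, G.Adj (σ i) w → c (σ.symm w) = c i) : util G c σ i = 1 := by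
  rw [util, filter_true_of_mem fun w hw => h w ((G.mem_neighborFinset _ _).1 hw), div_self]
  exact_mod_cast (card_pos.2 ⟨w, (G.mem_neighborFinset _ _).2 hw⟩).ne'

theorem util_pos_of_adj {w : V} (hw : G.Adj (σ i) w) (hc : c (σ.symm w) = c i) :
    0 < util G c σ i := by
  have hmem : w ∈ G.neighborFinset (σ i) := (G.mem_neighborFinset _ _).2 hw
  apply div_pos <;> norm_cast <;> apply card_pos.2
  exacts [⟨w, mem_filter.2 ⟨hmem, hc⟩⟩, ⟨w, hmem⟩]

theorem util_lt_one_of_adj {w : V} (hw : G.Adj (σ i) w) (hc : c (σ.symm w) ≠ c i) :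
    util G c σ i < 1 := by
  have hmem : w ∈ G.neighborFinset (σ i) := (G.mem_neighborFinset _ _).2 hw
  rw [util, div_lt_one (by exact_mod_cast card_pos.2 ⟨w, hmem⟩)]
  exact_mod_cast card_lt_card
    ⟨filter_subset _ _, fun hsub => hc (mem_filter.1 (hsub hmem)).2⟩

end Utility

theorem eq_sub_one_and_mul_add_one_le_of_sq_sub_two_le {k s : ℕ} (hk : 3 ≤ k) (hs : s ≤ k - 1)
    (h : k ^ 2 - 2 ≤ s * k + 1) : s = k - 1 ∧ s * k + 1 ≤ k ^ 2 - 2 := by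
  have hk2 : 2 ≤ k ^ 2 := by nlinarith
  zify [hk2, (by omega : 1 ≤ k)] at *
  constructor <;> nlinarith

section Tree

variable {k : ℕ}

theorem adj_root_iff {w : TV k} : (GT k).Adj .root w ↔ ∃ b, w = .mid b := by
  cases w <;> simp [mkGraph, adjT]

theorem adj_mid_iff {b : Fin (k*(k-1)-1)} {w : TV k} :
    (GT k).Adj (.mid b) w ↔ w = .root ∨ ∃ x, w = .leaf b x := by
  cases w <;> simp [mkGraph, adjT, eq_comm (a := b)]

theorem adj_leaf_iff {b : Fin (k*(k-1)-1)} {x : Fin k} {w : TV k} :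
    (GT k).Adj (.leaf b x) w ↔ w = .mid b := by
  cases w <;> simp [mkGraph, adjT]

section Swaps

variable {A K : Type*} [DecidableEq A] [DecidableEq K] {c : A → K} {σ : A ≃ TV k}
  {b b' : Fin (k*(k-1)-1)} {x y : Fin k} {s t : K}

theorem improving_leaf_mid (hbb : b ≠ b') (hx : c (σ.symm (.leaf b x)) = t)
    (hy : c (σ.symm (.leaf b' y)) = t) (hb : c (σ.symm (.mid b)) = s)
    (hb' : c (σ.symm (.mid b')) = s) (hst : s ≠ t) :
    improving (GT k) c σ (σ.symm (.leaf b x)) (σ.symm (.mid b')) := by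
  set σ' := swapA σ (σ.symm (.leaf b x)) (σ.symm (.mid b'))
  have hleaf' : σ' (σ.symm (.leaf b x)) = .mid b' := by simp [σ', swapA_apply_left]
  have hmid' : σ' (σ.symm (.mid b')) = .leaf b x := by simp [σ', swapA_apply_right]
  have hfix {w : TV k} (h₁ : w ≠ .leaf b x) (h₂ : w ≠ .mid b') : σ'.symm w = σ.symm w :=
    swapA_symm_apply_of_ne σ (by simpa using h₁) (by simpa using h₂)
  constructor
  · calc util (GT k) c σ _ = 0 := util_eq_zero_of_forall_adj fun w hw => by
          simp_all [adj_leaf_iff]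
      _ < util (GT k) c σ' _ := util_pos_of_adj (w := .leaf b' y)
          (by simp [hleaf', adj_mid_iff]) (by rw [hfix (by simp [hbb.symm]) (by simp)]; simp_all)
  · calc util (GT k) c σ _ < 1 := util_lt_one_of_adj (w := .leaf b' y)
          (by simp [adj_mid_iff]) (by simpa [hy, hb'] using hst.symm)
      _ = util (GT k) c σ' _ := (util_eq_one_of_forall_adj (w := .mid b)
          (by simp [hmid', adj_leaf_iff]) fun w hw => by
            rw [hmid', adj_leaf_iff] at hw
            subst hw
            rw [hfix (by simp) (by simpa using hbb)]
            simp_all).symm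

theorem improving_root_mid (hroot : c (σ.symm .root) = t) (hmid : ∀ b, c (σ.symm (.mid b)) ≠ t)
    (hx : c (σ.symm (.leaf b x)) = t)
    (hleaves : ∀ y, c (σ.symm (.leaf b y)) ≠ c (σ.symm (.mid b)))
    (hbb : b' ≠ b) (hb' : c (σ.symm (.mid b')) = c (σ.symm (.mid b))) :
    improving (GT k) c σ (σ.symm .root) (σ.symm (.mid b)) := by
  set σ' := swapA σ (σ.symm .root) (σ.symm (.mid b))
  have hroot' : σ' (σ.symm .root) = .mid b := by simp [σ', swapA_apply_left]
  have hmid' : σ' (σ.symm (.mid b)) = .root := by simp [σ', swapA_apply_right]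
  have hfix {w : TV k} (h₁ : w ≠ .root) (h₂ : w ≠ .mid b) : σ'.symm w = σ.symm w :=
    swapA_symm_apply_of_ne σ (by simpa using h₁) (by simpa using h₂)
  constructor
  · calc util (GT k) c σ _ = 0 := util_eq_zero_of_forall_adj fun w hw => by
          obtain ⟨b'', rfl⟩ := adj_root_iff.1 (by simpa using hw)
          simpa [hroot] using hmid b''
      _ < util (GT k) c σ' _ := util_pos_of_adj (w := .leaf b x)
          (by simp [hroot', adj_mid_iff]) (by rw [hfix (by simp) (by simp)]; simp_all)
  · calc util (GT k) c σ _ = 0 := util_eq_zero_of_forall_adj fun w hw => by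
          rcases adj_mid_iff.1 (by simpa using hw) with rfl | ⟨y, rfl⟩
          · simpa [hroot] using (hmid b).symm
          · simpa using hleaves y
      _ < util (GT k) c σ' _ := util_pos_of_adj (w := .mid b')
          (by simp [hmid', adj_root_iff]) (by rw [hfix (by simp) (by simpa using hbb)]; simp_all)

end Swaps

section Counting

variable (σ : AgT k ≃ TV k) (t : Fin k)

def midsWithLeafOfType : Finset (Fin (k*(k-1)-1)) :=
  univ.filter fun b => ∃ x, (σ.symm (.leaf b x)).1 = t

def rootAndLeavesBelow (S : Finset (Fin (k*(k-1)-1))) : Finset (TV k) :=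
  insert .root (S.biUnion fun b => univ.image (TV.leaf b))

variable {σ t}

theorem leaf_mem_rootAndLeavesBelow {S : Finset (Fin (k*(k-1)-1))} {b : Fin (k*(k-1)-1)}
    (hb : b ∈ S) (x : Fin k) : TV.leaf b x ∈ rootAndLeavesBelow S :=
  mem_insert_of_mem (mem_biUnion.2 ⟨b, hb, mem_image_of_mem _ (mem_univ x)⟩)

theorem card_rootAndLeavesBelow_le (S : Finset (Fin (k*(k-1)-1))) :
    #(rootAndLeavesBelow S) ≤ #S * k + 1 :=
  (card_insert_le _ _).trans <| Nat.add_le_add_right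
    (card_biUnion_le_card_mul _ _ _ fun _ _ => card_image_le.trans (card_fin k).le) 1

theorem apply_mem_rootAndLeavesBelow (hmid : ∀ b, (σ.symm (.mid b)).1 ≠ t) (j : Fin (k^2 - 2)) :
    σ (t, j) ∈ rootAndLeavesBelow (midsWithLeafOfType σ t) := by
  rcases h : σ (t, j) with _ | b | ⟨b, x⟩
  · exact mem_insert_self _ _
  · exact absurd (by rw [← h, σ.symm_apply_apply]) (hmid b)
  · refine leaf_mem_rootAndLeavesBelow (mem_filter.2 ⟨mem_univ _, x, ?_⟩) x
    rw [← h, σ.symm_apply_apply]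

theorem card_midsWithLeafOfType_le (hmid : ∀ b, (σ.symm (.mid b)).1 ≠ t)
    (hinj : Set.InjOn (fun b => (σ.symm (.mid b)).1) (midsWithLeafOfType σ t)) :
    #(midsWithLeafOfType σ t) ≤ k - 1 := by
  simpa using card_le_card_of_injOn _ (fun b _ => mem_erase.2 ⟨hmid b, mem_univ _⟩) hinj

theorem card_midsWithLeafOfType_eq_and_fst_symm_eq (hk : 3 ≤ k)
    (hmid : ∀ b, (σ.symm (.mid b)).1 ≠ t)
    (hinj : Set.InjOn (fun b => (σ.symm (.mid b)).1) (midsWithLeafOfType σ t)) :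
    #(midsWithLeafOfType σ t) = k - 1 ∧
      ∀ v ∈ rootAndLeavesBelow (midsWithLeafOfType σ t), (σ.symm v).1 = t := by
  set S := midsWithLeafOfType σ t
  set T := univ.image fun j => σ (t, j)
  have hTP : T ⊆ rootAndLeavesBelow S := by
    simpa [T, subset_iff] using apply_mem_rootAndLeavesBelow hmid
  have hT : #T = k^2 - 2 := by
    simpa using card_image_of_injective univ fun j j' (h : σ (t, j) = σ (t, j')) =>
      Prod.mk_right_injective t (σ.injective h)
  have hS : #S ≤ k - 1 := card_midsWithLeafOfType_le hmid hinj
  have hP : #(rootAndLeavesBelow S) ≤ #S * k + 1 := card_rootAndLeavesBelow_le S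
  have harith := eq_sub_one_and_mul_add_one_le_of_sq_sub_two_le hk hS
    (hT.symm.trans_le ((card_le_card hTP).trans hP))
  refine ⟨harith.1, fun v hv => ?_⟩
  rw [← eq_of_subset_of_card_le hTP (by omega)] at hv
  obtain ⟨j, -, rfl⟩ := mem_image.1 hv
  simp

theorem exists_other_mid_of_same_type (hk : 3 ≤ k) (hmid : ∀ b, (σ.symm (.mid b)).1 ≠ t)
    (hinj : Set.InjOn (fun b => (σ.symm (.mid b)).1) (midsWithLeafOfType σ t)) :
    ∃ b ∈ midsWithLeafOfType σ t, ∃ b', b' ≠ b ∧ (σ.symm (.mid b')).1 = (σ.symm (.mid b)).1 := by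
  set S := midsWithLeafOfType σ t
  have hS : #S = k - 1 := (card_midsWithLeafOfType_eq_and_fst_symm_eq hk hmid hinj).1
  have himage : S.image (fun b => (σ.symm (.mid b)).1) = univ.erase t := by
    refine eq_of_subset_of_card_le (fun _ h => ?_) (by simp [card_image_of_injOn hinj, hS])
    obtain ⟨b, -, rfl⟩ := mem_image.1 h
    exact mem_erase.2 ⟨hmid b, mem_univ _⟩
  obtain ⟨b', -, hb'⟩ := exists_mem_notMem_of_card_lt_card (s := S) (t := univ) <| by
    rw [hS, card_univ, Fintype.card_fin]
    have := Nat.mul_le_mul_right (k - 1) hk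
    omega
  obtain ⟨b, hb, hsame⟩ := mem_image.1 (himage ▸ mem_erase.2 ⟨hmid b', mem_univ _⟩)
  exact ⟨b, hb, b', fun h => hb' (h ▸ hb), hsame.symm⟩

end Counting

end Tree

/-- Lemma 3 of the paper: in the `k`-swap game (`k ≥ 3`) with `k² − 2`
strategic agents per type on the three-layer tree, no assignment in which some type has
no agent occupying any middle node (node of `B`) is an equilibrium. -/
theorem not_equilibrium_of_missing_type_on_mid (k : ℕ) (hk : 3 ≤ k) (σ : AgT k ≃ TV k)
    (hmiss : ∃ t : Fin k, ∀ b : Fin (k*(k-1)-1), (σ.symm (TV.mid b)).1 ≠ t) :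
    ¬ isEquilibrium (GT k) Prod.fst σ := by
  obtain ⟨t, hmid⟩ := hmiss
  rw [isEquilibrium, not_not]
  by_cases hinj : Set.InjOn (fun b => (σ.symm (TV.mid b)).1) (midsWithLeafOfType σ t)
  · have hP := (card_midsWithLeafOfType_eq_and_fst_symm_eq hk hmid hinj).2
    obtain ⟨b, hb, b', hbb, hsame⟩ := exists_other_mid_of_same_type hk hmid hinj
    obtain ⟨x, hx⟩ := (mem_filter.1 hb).2
    have hleaves y : (σ.symm (.leaf b y)).1 ≠ (σ.symm (.mid b)).1 :=
      (hP _ (leaf_mem_rootAndLeavesBelow hb y)).trans_ne (hmid b).symm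
    exact ⟨_, _, improving_root_mid (hP _ (mem_insert_self _ _)) hmid hx hleaves hbb hsame⟩
  · simp only [Set.InjOn, not_forall] at hinj
    obtain ⟨b, hb, b', hb', hsame, hbb⟩ := hinj
    obtain ⟨x, hx⟩ := (mem_filter.1 hb).2
    obtain ⟨y, hy⟩ := (mem_filter.1 hb').2
    exact ⟨_, _, improving_leaf_mid hbb hx hy rfl hsame.symm (hmid b)⟩

end SwapGame
end

section
/- Let v be an equilibrium assignment of a 2-swap game with only strategic agents in which every agent has strictly positive utility. Then for every pair (i, j) consisting of one red agent i and one blue agent j, it holds that u_i(v) + u_j(v) ≥ 1/2. -/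
/-!
If `u_i + u_j < 1/2` for agents of different types, each of them gains by swapping. After the
swap `i` sits at `j`'s node, whose neighbours other than `i` itself are all of `i`'s type except
`j`'s friends; so `i`'s new utility is at least `1 - u_j - 1/deg(j) ≥ 1 - 2 u_j > 2 u_i ≥ u_i`,
where `1/deg(j) ≤ u_j` because `u_j > 0` means `j` has at least one friend. By symmetry `j`
gains too, contradicting equilibrium.
-/

open Finset

namespace SwapGame

lemma swapA_comm {A V : Type*} [DecidableEq A] (σ : A ≃ V) (i j : A) :
    swapA σ i j = swapA σ j i := by
  rw [swapA, swapA, Equiv.swap_comm]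

section

variable {A V K : Type*} [Fintype V] [DecidableEq K]
  (G : SimpleGraph V) [DecidableRel G.Adj] (c : A → K) (σ : A ≃ V)

lemma util_nonneg (k : A) : 0 ≤ util G c σ k := by
  unfold util
  positivity

lemma inv_card_neighborFinset_le_util {k : A} (h : 0 < util G c σ k) :
    1 / ((G.neighborFinset (σ k)).card : ℚ) ≤ util G c σ k := by
  unfold util at h ⊢
  have hfriend : ((G.neighborFinset (σ k)).filter (fun w => c (σ.symm w) = c k)).card ≠ 0 := by
    intro h0
    simp [h0] at h
  have : (1 : ℚ) ≤ ((G.neighborFinset (σ k)).filter (fun w => c (σ.symm w) = c k)).card := by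
    exact_mod_cast Nat.one_le_iff_ne_zero.mpr hfriend
  gcongr

variable [DecidableEq A] [DecidableEq V]

/-- The `- 1` discounts `i`'s old node, which `j` occupies after the swap. -/
lemma card_filter_sub_one_div_le_util_swapA {i j : A} (hij : c j ≠ c i) :
    (((G.neighborFinset (σ j)).filter (fun w => c (σ.symm w) = c i)).card - 1 : ℚ) /
        (G.neighborFinset (σ j)).card ≤ util G c (swapA σ i j) i := by
  have hnode : swapA σ i j i = σ j := by simp [swapA]
  have hsub : ((G.neighborFinset (σ j)).filter (fun w => c (σ.symm w) = c i)).erase (σ i) ⊆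
      (G.neighborFinset (σ j)).filter (fun w => c ((swapA σ i j).symm w) = c i) := by
    intro w hw
    obtain ⟨hwi, hw⟩ := mem_erase.mp hw
    obtain ⟨hadj, hcw⟩ := mem_filter.mp hw
    have hwj : w ≠ σ j := G.ne_of_adj ((G.mem_neighborFinset _ _).mp hadj) |>.symm
    refine mem_filter.mpr ⟨hadj, ?_⟩
    rwa [swapA, Equiv.symm_trans_apply, Equiv.symm_swap, Equiv.swap_apply_of_ne_of_ne
      (by rintro rfl; simp at hwi) (by rintro rfl; simp at hwj)]
  rw [util, hnode]
  gcongr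
  calc (((G.neighborFinset (σ j)).filter (fun w => c (σ.symm w) = c i)).card - 1 : ℚ)
      ≤ (((G.neighborFinset (σ j)).filter (fun w => c (σ.symm w) = c i)).erase (σ i)).card := by
        have := pred_card_le_card_erase
          (s := (G.neighborFinset (σ j)).filter (fun w => c (σ.symm w) = c i)) (a := σ i)
        rw [sub_le_iff_le_add]
        norm_cast
        omega
    _ ≤ _ := by exact_mod_cast card_le_card hsub

end

section TwoTypes

variable {A V : Type*} [Fintype V]
  (G : SimpleGraph V) [DecidableRel G.Adj] (c : A → Fin 2) (σ : A ≃ V)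

lemma card_filter_add_card_filter_of_ne {i j : A} (hij : c j ≠ c i) :
    ((G.neighborFinset (σ j)).filter (fun w => c (σ.symm w) = c j)).card +
      ((G.neighborFinset (σ j)).filter (fun w => c (σ.symm w) = c i)).card =
        (G.neighborFinset (σ j)).card := by
  have hother : ∀ t : Fin 2, t = c i ↔ ¬ t = c j := by omega
  simp_rw [hother]
  exact card_filter_add_card_filter_not _

variable [DecidableEq A] [DecidableEq V]

lemma one_sub_two_mul_util_le_util_swapA {i j : A} (hij : c j ≠ c i)
    (hj : 0 < util G c σ j) : 1 - 2 * util G c σ j ≤ util G c (swapA σ i j) i := by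
  have hdeg : (0 : ℚ) < (G.neighborFinset (σ j)).card := by
    by_contra! h0
    rw [util, le_antisymm h0 (Nat.cast_nonneg _), div_zero] at hj
    exact hj.false
  have hpart : (1 : ℚ) - util G c σ j =
      ((G.neighborFinset (σ j)).filter (fun w => c (σ.symm w) = c i)).card /
        (G.neighborFinset (σ j)).card := by
    rw [util, eq_div_iff hdeg.ne', sub_mul, div_mul_cancel₀ _ hdeg.ne', one_mul, sub_eq_iff_eq_add]
    exact_mod_cast (card_filter_add_card_filter_of_ne G c σ hij).symm.trans (add_comm _ _)
  calc 1 - 2 * util G c σ j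
      ≤ 1 - util G c σ j - 1 / (G.neighborFinset (σ j)).card := by
        linarith [inv_card_neighborFinset_le_util G c σ hj]
    _ = _ := by rw [hpart, sub_div, one_div]
    _ ≤ _ := card_filter_sub_one_div_le_util_swapA G c σ hij

lemma util_lt_util_swapA_of_add_lt_half {i j : A} (hij : c j ≠ c i)
    (hj : 0 < util G c σ j) (hsum : util G c σ i + util G c σ j < 1 / 2) :
    util G c σ i < util G c (swapA σ i j) i := by
  linarith [one_sub_two_mul_util_le_util_swapA G c σ hij hj, util_nonneg G c σ i]

end TwoTypes

theorem util_pair_ge_half_general {A V : Type} [DecidableEq A]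
    [Fintype V] [DecidableEq V] (G : SimpleGraph V) [DecidableRel G.Adj]
    (c : A → Fin 2)
    (σ : A ≃ V) (heq : isEquilibrium G c σ) (hpos : ∀ i : A, 0 < util G c σ i)
    (i j : A) (hi : c i = 0) (hj : c j = 1) :
    1 / 2 ≤ util G c σ i + util G c σ j := by
  by_contra! hsum
  have hij : c j ≠ c i := by simp [hi, hj]
  refine heq ⟨i, j, util_lt_util_swapA_of_add_lt_half G c σ hij (hpos j) hsum, ?_⟩
  rw [swapA_comm]
  exact util_lt_util_swapA_of_add_lt_half G c σ hij.symm (hpos i) (by linarith)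

/-- in a 2-swap game with only strategic agents (two nonempty types,
connected topology), if `v` is an equilibrium assignment in which every agent has
strictly positive utility, then for every red agent `i` and blue agent `j` we have
`u_i(v) + u_j(v) ≥ 1/2`. -/
theorem util_pair_ge_half {A V : Type} [Fintype A] [DecidableEq A]
    [Fintype V] [DecidableEq V] (G : SimpleGraph V) [DecidableRel G.Adj]
    (hconn : G.Connected) (c : A → Fin 2) (hne : ∀ t : Fin 2, ∃ i, c i = t)
    (σ : A ≃ V) (heq : isEquilibrium G c σ) (hpos : ∀ i : A, 0 < util G c σ i)
    (i j : A) (hi : c i = 0) (hj : c j = 1) :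
    1 / 2 ≤ util G c σ i + util G c σ j :=
  util_pair_ge_half_general G c σ heq hpos i j hi hj

end SwapGame
end
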